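/- arXiv:2105.07132 — 8 statements merged into one kernel-verified Lean document; each statement's English description precedes it below -/
import Mathlib

section
/- If a set of paths {π_1,...,π_n} contains no reachable terminal deadlock and no reachable cyclic deadlock, then in any fair execution the potential function φ = Σ_i ((|π_i|−1) − clock_i) is non-increasing, and over any interval in which every agent activates at least once while φ>0, φ strictly decreases; consequently all agents reach their goals after finitely many activations. -/
open scoped Classical

/-- An OTIMAPP path set: `n` agents, agent `i` follows the path
`loc i 0, loc i 1, ..., loc i (L i)`; `loc i 0` is its start and `loc i (L i)` its goal. -/
structure OTI (V : Type) (n : ℕ) where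
  L : Fin n → ℕ
  loc : Fin n → ℕ → V

namespace OTI

variable {V : Type} {n : ℕ}

/-- Activation of agent `i` in configuration `c` (clocks): the agent advances iff it is not
at the end of its path and its next vertex is unoccupied. -/
noncomputable def step (P : OTI V n) (c : Fin n → ℕ) (i : Fin n) : Fin n → ℕ :=
  if c i < P.L i ∧ ∀ j, j ≠ i → P.loc j (c j) ≠ P.loc i (c i + 1)
  then Function.update c i (c i + 1) else c

/-- Configuration after the first `k` activations of execution `e`. -/
noncomputable def run (P : OTI V n) (e : ℕ → Fin n) : ℕ → Fin n → ℕ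
  | 0 => fun _ => 0
  | k + 1 => P.step (P.run e k) (e k)

/-- An execution is fair when every agent is activated infinitely often. -/
def Fair (e : ℕ → Fin n) : Prop := ∀ (i : Fin n) (k : ℕ), ∃ m, k ≤ m ∧ e m = i

/-- All agents reach their goals after finitely many activations. -/
def Terminates (P : OTI V n) (e : ℕ → Fin n) : Prop :=
  ∃ k, ∀ i, P.run e k i = P.L i

/-- A feasible OTIMAPP solution: every fair execution terminates. -/
def Feasible (P : OTI V n) : Prop := ∀ e, Fair e → P.Terminates e

/-- A configuration (assignment of clocks) is reachable by some execution. -/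
def Reachable (P : OTI V n) (c : Fin n → ℕ) : Prop := ∃ e k, P.run e k = c

/-- A potential cyclic deadlock: distinct agents `σ 0, …, σ k` with clock values `t`
such that each agent's next vertex is the next agent's current vertex, cyclically. -/
def PotentialCyclic (P : OTI V n) {k : ℕ} (σ : Fin (k + 1) → Fin n)
    (t : Fin (k + 1) → ℕ) : Prop :=
  Function.Injective σ ∧ (∀ m, t m < P.L (σ m)) ∧
    ∀ m, P.loc (σ m) (t m + 1) = P.loc (σ (m + 1)) (t (m + 1))

/-- A reachable cyclic deadlock: a potential cyclic deadlock whose clock values are realized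
by some reachable configuration. -/
def ReachableCyclic (P : OTI V n) {k : ℕ} (σ : Fin (k + 1) → Fin n)
    (t : Fin (k + 1) → ℕ) : Prop :=
  P.PotentialCyclic σ t ∧ ∃ c, P.Reachable c ∧ ∀ m, c (σ m) = t m

/-- A potential terminal deadlock `(i, j, tj)`: agent `i`'s goal lies on `j`'s path. -/
def PotentialTerminal (P : OTI V n) (i j : Fin n) (tj : ℕ) : Prop :=
  i ≠ j ∧ tj ≤ P.L j ∧ P.loc i (P.L i) = P.loc j tj

/-- A reachable terminal deadlock: some execution puts `i` at its goal and `j` at clock `tj - 1`. -/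
def ReachableTerminal (P : OTI V n) (i j : Fin n) (tj : ℕ) : Prop :=
  P.PotentialTerminal i j tj ∧ ∃ c, P.Reachable c ∧ c i = P.L i ∧ c j + 1 = tj

/-- The path set is a set of paths on graph `G` with starts `s` and goals `g`. -/
def OnGraph (P : OTI V n) (G : SimpleGraph V) (s g : Fin n → V) : Prop :=
  (∀ i, P.loc i 0 = s i) ∧ (∀ i, P.loc i (P.L i) = g i) ∧
    ∀ i t, t < P.L i → G.Adj (P.loc i t) (P.loc i (t + 1))

/-- A fragment: a nonempty chain of (agent, clock) pairs with distinct agents, where each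
agent's next vertex equals the next agent's current vertex. -/
def IsFragment (P : OTI V n) (l : List (Fin n × ℕ)) : Prop :=
  l ≠ [] ∧ (l.map Prod.fst).Nodup ∧ (∀ p ∈ l, p.2 < P.L p.1) ∧
    l.Chain' fun p q => P.loc p.1 (p.2 + 1) = P.loc q.1 q.2

/-- The vertex a fragment starts from. -/
def fragStart (P : OTI V n) (l : List (Fin n × ℕ)) : Option V :=
  l.head?.map fun p => P.loc p.1 p.2

/-- The vertex a fragment ends at. -/
def fragEnd (P : OTI V n) (l : List (Fin n × ℕ)) : Option V :=
  l.getLast?.map fun p => P.loc p.1 (p.2 + 1)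

end OTI

namespace OTI

/-- The potential function `φ = Σ_i ((|π_i|-1) - clock_i)`. -/
noncomputable def phi {V : Type} {n : ℕ} (P : OTI V n) (c : Fin n → ℕ) : ℕ :=
  ∑ i : Fin n, (P.L i - c i)

end OTI

namespace OTI

variable {V : Type} {n : ℕ}

lemma run_le_L (P : OTI V n) (e : ℕ → Fin n) (k : ℕ) (i : Fin n) :
    P.run e k i ≤ P.L i := by
  induction k with
  | zero => simp [run]
  | succ k ih =>
    show P.step (P.run e k) (e k) i ≤ P.L i
    unfold step
    split
    · rename_i h
      rcases eq_or_ne i (e k) with rfl | hne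
      · simpa using h.1
      · simpa [Function.update_of_ne hne] using ih
    · exact ih

lemma phi_update (P : OTI V n) (c : Fin n → ℕ) (i : Fin n) (h : c i < P.L i) :
    P.phi (Function.update c i (c i + 1)) + 1 = P.phi c := by
  classical
  have hfun : (fun j => P.L j - Function.update c i (c i + 1) j) =
      Function.update (fun j => P.L j - c j) i (P.L i - (c i + 1)) := by
    funext j
    rcases eq_or_ne j i with rfl | hne
    · simp
    · simp [Function.update_of_ne hne]
  have h1 : P.phi (Function.update c i (c i + 1)) =
      (P.L i - (c i + 1)) + ∑ j ∈ Finset.univ.erase i, (P.L j - c j) := by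
    unfold phi
    have hsum : (∑ j : Fin n, (P.L j - Function.update c i (c i + 1) j)) =
        ∑ j : Fin n, Function.update (fun j => P.L j - c j) i (P.L i - (c i + 1)) j :=
      Finset.sum_congr rfl fun j _ => congrFun hfun j
    rw [hsum, Finset.sum_update_of_mem (Finset.mem_univ i),
      Finset.sdiff_singleton_eq_erase]
  have h2 : P.phi c = (P.L i - c i) + ∑ j ∈ Finset.univ.erase i, (P.L j - c j) := by
    unfold phi
    exact (Finset.add_sum_erase _ _ (Finset.mem_univ i)).symm
  rw [h1, h2]
  omega

lemma phi_step_le (P : OTI V n) (c : Fin n → ℕ) (i : Fin n) :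
    P.phi (P.step c i) ≤ P.phi c := by
  unfold step
  split
  · rename_i h
    have := P.phi_update c i h.1
    omega
  · exact le_rfl

lemma step_eq_of_phi_eq (P : OTI V n) (c : Fin n → ℕ) (i : Fin n)
    (h : P.phi (P.step c i) = P.phi c) : P.step c i = c := by
  by_cases hcond : c i < P.L i ∧ ∀ j, j ≠ i → P.loc j (c j) ≠ P.loc i (c i + 1)
  · exfalso
    have hstep : P.step c i = Function.update c i (c i + 1) := by
      unfold step; rw [if_pos hcond]
    rw [hstep] at h
    have := P.phi_update c i hcond.1
    omega
  · unfold step; rw [if_neg hcond]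

lemma phi_run_antitone (P : OTI V n) (e : ℕ → Fin n) {k₁ k₂ : ℕ} (h : k₁ ≤ k₂) :
    P.phi (P.run e k₂) ≤ P.phi (P.run e k₁) := by
  induction k₂ with
  | zero =>
    have : k₁ = 0 := by omega
    subst this; exact le_rfl
  | succ k ih =>
    rcases Nat.lt_or_ge k₁ (k+1) with hlt | hge
    · have := ih (by omega)
      have h2 := P.phi_step_le (P.run e k) (e k)
      exact le_trans h2 this
    · have : k₁ = k + 1 := by omega
      subst this; exact le_rfl

lemma run_const_of_phi_eq (P : OTI V n) (e : ℕ → Fin n) {k₁ k₂ : ℕ} (h : k₁ ≤ k₂)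
    (hphi : P.phi (P.run e k₂) = P.phi (P.run e k₁)) :
    ∀ m, k₁ ≤ m → m ≤ k₂ → P.run e m = P.run e k₁ := by
  intro m hm1 hm2
  induction m with
  | zero =>
    have : k₁ = 0 := by omega
    subst this; rfl
  | succ m ih =>
    rcases Nat.lt_or_ge k₁ (m+1) with hlt | hge
    · have hmk : P.run e m = P.run e k₁ := ih (by omega) (by omega)
      have hle1 : P.phi (P.run e (m+1)) ≤ P.phi (P.run e k₁) := P.phi_run_antitone e (by omega)
      have hle2 : P.phi (P.run e k₂) ≤ P.phi (P.run e (m+1)) := P.phi_run_antitone e (by omega)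
      have heq : P.phi (P.run e (m+1)) = P.phi (P.run e m) := by
        rw [hmk]; omega
      have := P.step_eq_of_phi_eq (P.run e m) (e m) heq
      show P.step (P.run e m) (e m) = P.run e k₁
      rw [this, hmk]
    · have : k₁ = m + 1 := by omega
      subst this; rfl

/-- Key deadlock lemma: in a reachable configuration where every non-finished agent is
blocked and some agent is non-finished, we get a reachable deadlock. -/
lemma no_all_blocked (P : OTI V n)
    (hT : ∀ (i j : Fin n) (tj : ℕ), ¬ P.ReachableTerminal i j tj)
    (hC : ∀ (k : ℕ) (σ : Fin (k + 1) → Fin n) (t : Fin (k + 1) → ℕ),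
      ¬ P.ReachableCyclic σ t)
    (c : Fin n → ℕ) (hreach : P.Reachable c) (hcle : ∀ i, c i ≤ P.L i)
    (H : ∀ i, c i < P.L i → ∃ j, j ≠ i ∧ P.loc j (c j) = P.loc i (c i + 1))
    (i₀ : Fin n) (h₀ : c i₀ < P.L i₀) : False := by
  classical
  set S := {i : Fin n // c i < P.L i} with hS
  have hstep : ∀ x : S, ∃ j : S, j.1 ≠ x.1 ∧ P.loc j.1 (c j.1) = P.loc x.1 (c x.1 + 1) := by
    intro x
    obtain ⟨j, hji, hj⟩ := H x.1 x.2
    have hjlt : c j < P.L j := by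
      rcases Nat.lt_or_ge (c j) (P.L j) with h | h
      · exact h
      · exfalso
        have hcj : c j = P.L j := le_antisymm (hcle j) h
        exact hT j x.1 (c x.1 + 1)
          ⟨⟨hji, by omega, by rw [← hcj]; exact hj⟩, c, hreach, hcj, rfl⟩
    exact ⟨⟨j, hjlt⟩, hji, hj⟩
  choose f hf1 hf2 using hstep
  set x₀ : S := ⟨i₀, h₀⟩ with hx₀
  -- pigeonhole: the orbit of x₀ under f repeats
  obtain ⟨a, b, hab, heq⟩ : ∃ a b : ℕ, a ≠ b ∧ f^[a] x₀ = f^[b] x₀ := by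
    obtain ⟨a, b, hab, heq⟩ := Finite.exists_ne_map_eq_of_infinite (fun m : ℕ => f^[m] x₀)
    exact ⟨a, b, hab, heq⟩
  wlog hlt : a < b generalizing a b
  · exact this b a hab.symm heq.symm (by omega)
  set y : S := f^[a] x₀ with hy
  have hper : ∃ p, 0 < p ∧ f^[p] y = y := by
    refine ⟨b - a, by omega, ?_⟩
    rw [hy, ← Function.iterate_add_apply]
    rw [show b - a + a = b by omega]
    exact heq.symm
  obtain ⟨p, hppos, hfp, hpmin⟩ :
      ∃ p, 0 < p ∧ f^[p] y = y ∧ ∀ q, 0 < q → q < p → f^[q] y ≠ y := by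
    refine ⟨Nat.find hper, (Nat.find_spec hper).1, (Nat.find_spec hper).2, ?_⟩
    intro q hq hqp hcon
    exact Nat.find_min hper hqp ⟨hq, hcon⟩
  have hp2 : 2 ≤ p := by
    by_contra h
    have hp1 : p = 1 := by omega
    have hfy : f^[1] y = y := by rw [← hp1]; exact hfp
    simp only [Function.iterate_one] at hfy
    exact hf1 y (congrArg Subtype.val hfy)
  obtain ⟨k, rfl⟩ : ∃ k, p = k + 1 := ⟨p - 1, by omega⟩
  have hkp : k + 1 = k + 1 := rfl
  set σ : Fin (k + 1) → Fin n := fun m => (f^[m.1] y).1 with hσ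
  set t : Fin (k + 1) → ℕ := fun m => c (σ m) with ht
  have hiter : ∀ i j : ℕ, i ≤ j → j < k + 1 → f^[i] y = f^[j] y → i = j := by
    intro i j hij hjp hfij
    by_contra hne
    have hq : f^[k + 1 - j + i] y = y := by
      have h1 : f^[k + 1 - j + i] y = f^[k + 1 - j] (f^[i] y) :=
        Function.iterate_add_apply f _ _ y
      have h2 : f^[k + 1] y = f^[k + 1 - j] (f^[j] y) := by
        conv_lhs => rw [show k + 1 = k + 1 - j + j from (Nat.sub_add_cancel (le_of_lt hjp)).symm]
        exact Function.iterate_add_apply f _ _ y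
      rw [h1, hfij, ← h2, hfp]
    have hd : k + 1 - j + j = k + 1 := Nat.sub_add_cancel (le_of_lt hjp)
    have hdpos : 0 < k + 1 - j := Nat.sub_pos_of_lt hjp
    exact hpmin (k + 1 - j + i) (by omega) (by omega) hq
  have hinj : Function.Injective σ := by
    intro m m' hmm
    have hval : (f^[m.1] y).1 = (f^[m'.1] y).1 := hmm
    have hsub : f^[m.1] y = f^[m'.1] y := Subtype.ext hval
    rcases le_or_gt m.1 m'.1 with h | h
    · exact Fin.ext (hiter m.1 m'.1 h (by omega) hsub)
    · exact Fin.ext ((hiter m'.1 m.1 (by omega) (by omega) hsub.symm).symm)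
  have hsucc : ∀ m : Fin (k + 1), f^[(m + 1).1] y = f (f^[m.1] y) := by
    intro m
    have hval : (m + 1).1 = (m.1 + 1) % (k + 1) := by
      rw [Fin.add_def]
      congr 1
      simp [Nat.mod_eq_of_lt (show 1 < k + 1 by omega)]
    rcases Nat.lt_or_ge (m.1 + 1) (k + 1) with h | h
    · rw [hval, Nat.mod_eq_of_lt h, Function.iterate_succ_apply']
    · have hm : m.1 = k := by omega
      rw [hval, hm]
      simp only [Nat.mod_self]
      rw [show f (f^[k] y) = f^[k+1] y from (Function.iterate_succ_apply' f k y).symm, hkp, hfp]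
      rfl
  have hchain : ∀ m : Fin (k + 1), P.loc (σ m) (t m + 1) = P.loc (σ (m + 1)) (t (m + 1)) := by
    intro m
    have hthis := hf2 (f^[m.1] y)
    show P.loc (f^[m.1] y).1 (c (f^[m.1] y).1 + 1) = P.loc (f^[(m+1).1] y).1 (c (f^[(m+1).1] y).1)
    rw [hsucc m]
    exact hthis.symm
  exact hC k σ t ⟨⟨hinj, fun m => (f^[m.1] y).2, hchain⟩, c, hreach, fun m => rfl⟩

end OTI

/-- with no reachable deadlocks, in any fair execution `φ` is non-increasing,
strictly decreases over any interval where every agent activates while `φ > 0`, and hence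
all agents reach their goals in finitely many activations. -/
theorem phi_decreases_and_terminates {V : Type} {n : ℕ} (P : OTI V n)
    (hs : Function.Injective fun i => P.loc i 0)
    (hg : Function.Injective fun i => P.loc i (P.L i))
    (hT : ∀ (i j : Fin n) (tj : ℕ), ¬ P.ReachableTerminal i j tj)
    (hC : ∀ (k : ℕ) (σ : Fin (k + 1) → Fin n) (t : Fin (k + 1) → ℕ),
      ¬ P.ReachableCyclic σ t)
    (e : ℕ → Fin n) (he : OTI.Fair e) :
    (∀ k, P.phi (P.run e (k + 1)) ≤ P.phi (P.run e k)) ∧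
    (∀ k₁ k₂, k₁ ≤ k₂ → (∀ i : Fin n, ∃ m, k₁ ≤ m ∧ m < k₂ ∧ e m = i) →
      0 < P.phi (P.run e k₁) → P.phi (P.run e k₂) < P.phi (P.run e k₁)) ∧
    P.Terminates e := by
  classical
  have part1 : ∀ k, P.phi (P.run e (k + 1)) ≤ P.phi (P.run e k) := by
    intro k
    exact P.phi_step_le (P.run e k) (e k)
  have part2 : ∀ k₁ k₂, k₁ ≤ k₂ → (∀ i : Fin n, ∃ m, k₁ ≤ m ∧ m < k₂ ∧ e m = i) →
      0 < P.phi (P.run e k₁) → P.phi (P.run e k₂) < P.phi (P.run e k₁) := by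
    intro k₁ k₂ hle hall hpos
    by_contra hcon
    have hge : P.phi (P.run e k₂) = P.phi (P.run e k₁) := by
      have := P.phi_run_antitone e hle
      omega
    have hconst := P.run_const_of_phi_eq e hle hge
    -- every non-finished agent is blocked at c
    have H : ∀ i, P.run e k₁ i < P.L i →
        ∃ j, j ≠ i ∧ P.loc j (P.run e k₁ j) = P.loc i (P.run e k₁ i + 1) := by
      intro i hi
      obtain ⟨m, hm1, hm2, hm3⟩ := hall i
      have hmc : P.run e m = P.run e k₁ := hconst m hm1 (by omega)
      have hphi1 : P.phi (P.run e (m + 1)) = P.phi (P.run e m) := by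
        have h1 := P.phi_run_antitone e (show k₁ ≤ m + 1 by omega)
        have h2 := P.phi_run_antitone e (show m + 1 ≤ k₂ by omega)
        have h4 : P.phi (P.run e m) = P.phi (P.run e k₁) := by rw [hmc]
        omega
      -- the step at m is the identity
      have hid : P.step (P.run e m) (e m) = P.run e m :=
        P.step_eq_of_phi_eq (P.run e m) (e m) hphi1
      rw [hm3, hmc] at hid
      -- hence the step condition fails
      by_contra hno
      push_neg at hno
      have hcond : P.run e k₁ i < P.L i ∧
          ∀ j, j ≠ i → P.loc j (P.run e k₁ j) ≠ P.loc i (P.run e k₁ i + 1) := by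
        refine ⟨hi, fun j hj hloc => ?_⟩
        exact (hno j hj) hloc
      have hupd : P.step (P.run e k₁) i = Function.update (P.run e k₁) i (P.run e k₁ i + 1) := by
        unfold OTI.step
        rw [if_pos hcond]
      rw [hupd] at hid
      have := congrFun hid i
      simp at this
    -- some agent is non-finished since phi > 0
    obtain ⟨i₀, h₀⟩ : ∃ i₀, P.run e k₁ i₀ < P.L i₀ := by
      by_contra hno
      push_neg at hno
      have : P.phi (P.run e k₁) = 0 := by
        unfold OTI.phi
        exact Finset.sum_eq_zero fun i _ => by have := hno i; omega
      omega
    exact P.no_all_blocked hT hC (P.run e k₁) ⟨e, k₁, rfl⟩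
      (fun i => P.run_le_L e k₁ i) H i₀ h₀
  refine ⟨part1, part2, ?_⟩
  -- termination by induction on phi
  have key : ∀ N k, P.phi (P.run e k) ≤ N → ∃ k', P.phi (P.run e k') = 0 := by
    intro N
    induction N with
    | zero => intro k hk; exact ⟨k, by omega⟩
    | succ N ih =>
      intro k hk
      rcases Nat.eq_zero_or_pos (P.phi (P.run e k)) with h0 | hpos
      · exact ⟨k, h0⟩
      · -- pick activation times for all agents after k
        have hch : ∀ i : Fin n, ∃ m, k ≤ m ∧ e m = i := fun i => he i k
        choose m hm1 hm2 using hch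
        obtain ⟨i₀, h₀⟩ : ∃ i₀ : Fin n, P.L i₀ - P.run e k i₀ ≠ 0 := by
          by_contra hno
          push_neg at hno
          have : P.phi (P.run e k) = 0 := Finset.sum_eq_zero fun i _ => hno i
          omega
        set k₂ := (Finset.univ.sup m) + 1 with hk₂
        have hle : k ≤ k₂ := le_trans (hm1 i₀) (by
          have := Finset.le_sup (f := m) (Finset.mem_univ i₀); omega)
        have hall : ∀ i : Fin n, ∃ m', k ≤ m' ∧ m' < k₂ ∧ e m' = i := by
          intro i
          refine ⟨m i, hm1 i, ?_, hm2 i⟩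
          have := Finset.le_sup (f := m) (Finset.mem_univ i)
          omega
        have := part2 k k₂ hle hall hpos
        exact ih k₂ (by omega)
  obtain ⟨k, hk⟩ := key (P.phi (P.run e 0)) 0 le_rfl
  refine ⟨k, fun i => ?_⟩
  have hle := P.run_le_L e k i
  have : P.L i - P.run e k i = 0 := by
    by_contra hne
    have hpos : 0 < P.L i - P.run e k i := Nat.pos_of_ne_zero hne
    have : 0 < P.phi (P.run e k) := by
      unfold OTI.phi
      exact lt_of_lt_of_le hpos (Finset.single_le_sum (f := fun j => P.L j - P.run e k j)
        (fun j _ => Nat.zero_le _) (Finset.mem_univ i))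
    omega
  omega
end

section
/- If a set of paths satisfies (1) no path π_i uses the goal vertex g_j of another agent a_j (except possibly when s_i = g_j and only at the start), and (2) there exist no potential cyclic deadlocks, then the set of paths is a feasible OTIMAPP solution. -/
open scoped Classical

/-!
Every effective activation raises the total clock `∑ i, c i`, which is bounded by `∑ i, L i`,
so every execution eventually freezes in a configuration `c`. Under a fair execution every
agent is activated at `c` without moving, so an unfinished agent `i` finds its next vertex
occupied by some agent `j`. By hypothesis (1) that vertex, which is not the start of `i`'s
path, is not the goal of `j`, so `j` is unfinished as well. Iterating "is blocked by" on the
finitely many unfinished agents eventually cycles, and the cycle is a potential cyclic deadlock.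
-/

theorem Finite.exists_injective_cycle {T : Type*} [Finite T] [Nonempty T] (f : T → T) :
    ∃ (k : ℕ) (σ : Fin (k + 1) → T), Function.Injective σ ∧ ∀ m, σ (m + 1) = f (σ m) := by
  obtain ⟨a, b, hab, heq⟩ :=
    Finite.exists_ne_map_eq_of_infinite fun k : ℕ => f^[k] (Classical.arbitrary T)
  wlog hlt : a < b generalizing a b
  · exact this b a hab.symm heq.symm (by omega)
  set x := f^[a] (Classical.arbitrary T)
  have hper : Function.IsPeriodicPt f (b - a) x := by
    rw [Function.IsPeriodicPt, Function.IsFixedPt, ← Function.iterate_add_apply,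
      Nat.sub_add_cancel hlt.le, heq]
  obtain ⟨k, hk⟩ := Nat.exists_eq_add_one_of_ne_zero (hper.minimalPeriod_pos (by omega)).ne'
  have hlt_period (m : Fin (k + 1)) : (m : ℕ) ∈ Set.Iio (Function.minimalPeriod f x) := by
    rw [Set.mem_Iio, hk]
    exact m.isLt
  refine ⟨k, fun m => f^[m] x, fun m m' h => ?_, fun m => ?_⟩
  · exact Fin.ext <| Function.iterate_injOn_Iio_minimalPeriod (hlt_period m) (hlt_period m') h
  · have hval : ((m + 1 : Fin (k + 1)) : ℕ) = ((m : ℕ) + 1) % Function.minimalPeriod f x := by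
      simp [Fin.val_add, hk]
    simp only [hval, Function.iterate_mod_minimalPeriod_eq, Function.iterate_succ_apply']

theorem Nat.exists_forall_ge_eq_of_monotone {f : ℕ → ℕ} (hf : Monotone f) {B : ℕ}
    (hB : ∀ k, f k ≤ B) : ∃ K, ∀ m, K ≤ m → f m = f K := by
  have hbdd : BddAbove (Set.range f) := ⟨B, by rintro _ ⟨k, rfl⟩; exact hB k⟩
  obtain ⟨K, hK⟩ := Nat.sSup_mem (Set.range_nonempty f) hbdd
  exact ⟨K, fun m hm => le_antisymm (hK ▸ le_csSup hbdd ⟨m, rfl⟩) (hf hm)⟩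

namespace OTI

variable {V : Type} {n : ℕ} (P : OTI V n)

theorem le_step (c : Fin n → ℕ) (i j : Fin n) : c j ≤ P.step c i j := by
  unfold step
  split_ifs
  · rcases eq_or_ne j i with rfl | hji
    · simp
    · simp [Function.update_of_ne hji]
  · rfl

theorem step_le {c : Fin n → ℕ} (hc : c ≤ P.L) (i : Fin n) : P.step c i ≤ P.L := by
  unfold step
  split_ifs with h
  · intro j
    rcases eq_or_ne j i with rfl | hji
    · simpa using h.1
    · simpa [Function.update_of_ne hji] using hc j
  · exact hc

theorem sum_step_of_ne {c : Fin n → ℕ} {i : Fin n} (h : P.step c i ≠ c) :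
    ∑ j, P.step c i j = ∑ j, c j + 1 := by
  unfold step at h ⊢
  split_ifs at h ⊢
  · rw [Finset.sum_update_of_mem (Finset.mem_univ i), Finset.sdiff_singleton_eq_erase,
      ← Finset.add_sum_erase Finset.univ c (Finset.mem_univ i)]
    ring
  · exact absurd rfl h

theorem exists_blocker_of_step_eq {c : Fin n → ℕ} {i : Fin n} (h : P.step c i = c)
    (hi : c i < P.L i) : ∃ j, j ≠ i ∧ P.loc j (c j) = P.loc i (c i + 1) := by
  by_contra! hfree
  unfold step at h
  rw [if_pos ⟨hi, hfree⟩] at h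
  simpa using congrFun h i

theorem run_succ (e : ℕ → Fin n) (k : ℕ) : P.run e (k + 1) = P.step (P.run e k) (e k) := rfl

theorem run_le (e : ℕ → Fin n) (k : ℕ) : P.run e k ≤ P.L := by
  induction k with
  | zero => exact fun _ => Nat.zero_le _
  | succ k ih => exact P.step_le ih _

theorem run_eventually_const (e : ℕ → Fin n) :
    ∃ K, ∀ m, K ≤ m → P.run e m = P.run e K := by
  have hmono : Monotone fun k => ∑ j, P.run e k j :=
    monotone_nat_of_le_succ fun k => Finset.sum_le_sum fun j _ => P.le_step _ _ j
  obtain ⟨K, hK⟩ := Nat.exists_forall_ge_eq_of_monotone hmono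
    fun k => Finset.sum_le_sum fun j _ => P.run_le e k j
  refine ⟨K, fun m hm => ?_⟩
  induction m, hm using Nat.le_induction with
  | base => rfl
  | succ m hm ih =>
    rw [← ih]
    by_contra hne
    rw [run_succ] at hne
    have hsum := P.sum_step_of_ne hne
    have hm_eq := hK m hm
    have hm_succ_eq := hK (m + 1) (Nat.le_succ_of_le hm)
    simp only [run_succ] at hm_succ_eq
    omega

theorem step_run_eq_of_fair {e : ℕ → Fin n} (he : Fair e) {K : ℕ}
    (hK : ∀ m, K ≤ m → P.run e m = P.run e K) (i : Fin n) :
    P.step (P.run e K) i = P.run e K := by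
  obtain ⟨m, hm, rfl⟩ := he i K
  rw [← hK m hm]
  exact (hK (m + 1) (Nat.le_succ_of_le hm)).trans (hK m hm).symm

theorem exists_unfinished_blocker
    (h1 : ∀ i j : Fin n, i ≠ j → ∀ t, t ≤ P.L i → P.loc i t = P.loc j (P.L j) → t = 0)
    {c : Fin n → ℕ} (hc : c ≤ P.L) (hstep : ∀ i, P.step c i = c) :
    ∀ i, c i < P.L i → ∃ j, c j < P.L j ∧ P.loc j (c j) = P.loc i (c i + 1) := by
  intro i hi
  obtain ⟨j, hji, hj⟩ := P.exists_blocker_of_step_eq (hstep i) hi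
  refine ⟨j, (hc j).lt_of_ne fun hjL => ?_, hj⟩
  have := h1 i j hji.symm (c i + 1) hi (hj.symm.trans (by rw [hjL]))
  omega

theorem exists_potentialCyclic_of_blocked {c : Fin n → ℕ} (hne : ∃ i, c i < P.L i)
    (hblock : ∀ i, c i < P.L i → ∃ j, c j < P.L j ∧ P.loc j (c j) = P.loc i (c i + 1)) :
    ∃ (k : ℕ) (σ : Fin (k + 1) → Fin n) (t : Fin (k + 1) → ℕ), P.PotentialCyclic σ t := by
  have : Nonempty {i // c i < P.L i} := let ⟨i, hi⟩ := hne; ⟨⟨i, hi⟩⟩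
  choose f hf using hblock
  obtain ⟨k, σ, hσ, hnext⟩ := Finite.exists_injective_cycle
    fun i : {i // c i < P.L i} => (⟨f i.1 i.2, (hf i.1 i.2).1⟩ : {i // c i < P.L i})
  refine ⟨k, fun m => (σ m).1, fun m => c (σ m).1, Subtype.val_injective.comp hσ,
    fun m => (σ m).2, fun m => ?_⟩
  simp only [hnext m]
  exact (hf _ _).2.symm

end OTI

theorem relaxed_sufficient_condition_general {V : Type} {n : ℕ} (P : OTI V n)
    (h1 : ∀ i j : Fin n, i ≠ j → ∀ t, t ≤ P.L i →
      P.loc i t = P.loc j (P.L j) → t = 0)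
    (h2 : ∀ (k : ℕ) (σ : Fin (k + 1) → Fin n) (t : Fin (k + 1) → ℕ),
      ¬ P.PotentialCyclic σ t) :
    P.Feasible := by
  intro e he
  obtain ⟨K, hK⟩ := P.run_eventually_const e
  refine ⟨K, fun i => ?_⟩
  by_contra hi
  have hblock := P.exists_unfinished_blocker h1 (P.run_le e K) (P.step_run_eq_of_fair he hK)
  obtain ⟨k, σ, t, hcyc⟩ :=
    P.exists_potentialCyclic_of_blocked ⟨i, (P.run_le e K i).lt_of_ne hi⟩ hblock
  exact h2 k σ t hcyc

/-- relaxed sufficient condition: if no path uses another agent's goal (except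
possibly at its start when `s_i = g_j`) and there are no potential cyclic deadlocks, then the
path set is a feasible OTIMAPP solution. -/
theorem relaxed_sufficient_condition {V : Type} {n : ℕ} (P : OTI V n)
    (hs : Function.Injective fun i => P.loc i 0)
    (hg : Function.Injective fun i => P.loc i (P.L i))
    (h1 : ∀ i j : Fin n, i ≠ j → ∀ t, t ≤ P.L i →
      P.loc i t = P.loc j (P.L j) → t = 0)
    (h2 : ∀ (k : ℕ) (σ : Fin (k + 1) → Fin n) (t : Fin (k + 1) → ℕ),
      ¬ P.PotentialCyclic σ t) :
    P.Feasible :=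
  relaxed_sufficient_condition_general P h1 h2
end

section
/- Every OTIMAPP instance that has a feasible solution is also solvable as a pebble motion problem, and there exists a pebble motion instance (on a star with three leaves, with two agents swapping through the center with a spare branch) that is solvable as pebble motion but has no feasible OTIMAPP solution. -/
open scoped Classical

/-- One pebble-motion operation: a single agent moves to an adjacent vacant vertex. -/
def PMStep {V : Type} {n : ℕ} (G : SimpleGraph V) (c c' : Fin n → V) : Prop :=
  ∃ i : Fin n, G.Adj (c i) (c' i) ∧ (∀ j, j ≠ i → c' j = c j) ∧ ∀ j, j ≠ i → c j ≠ c' i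

/-- The pebble motion problem is solvable: finitely many operations bring all agents from
their starts to their goals. -/
def PMSolvable {V : Type} {n : ℕ} (G : SimpleGraph V) (s g : Fin n → V) : Prop :=
  Relation.ReflTransGen (PMStep G) s g

/-!
Along any execution of a path set, each activation either changes nothing or moves one agent to
an adjacent vacant vertex, i.e. is a pebble-motion operation; a terminating fair execution (one
exists: round-robin) is therefore a PM solution.

On the star, agent 0 must first enter the center `1`. Let agent 1 advance alone until it is
blocked: it then sits on the center, either at its goal or about to enter leaf `0`, which agent 0
still occupies. No activation changes this reachable configuration, so the fair execution
continuing from it never terminates. PM avoids the deadlock by letting agent 0 pass first.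
-/

namespace OTI

variable {V : Type} {n : ℕ} (P : OTI V n)

theorem step_apply_of_ne {c : Fin n → ℕ} {i j : Fin n} (h : j ≠ i) : P.step c i j = c j := by
  unfold step
  split_ifs
  · exact Function.update_of_ne h _ _
  · rfl

theorem step_eq_update {c : Fin n → ℕ} {i : Fin n}
    (h : c i < P.L i ∧ ∀ j, j ≠ i → P.loc j (c j) ≠ P.loc i (c i + 1)) :
    P.step c i = Function.update c i (c i + 1) :=
  if_pos h

theorem step_eq_self_iff {c : Fin n → ℕ} {i : Fin n} :
    P.step c i = c ↔ ¬(c i < P.L i ∧ ∀ j, j ≠ i → P.loc j (c j) ≠ P.loc i (c i + 1)) := by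
  refine ⟨fun hc h => ?_, fun h => if_neg h⟩
  rw [P.step_eq_update h] at hc
  simpa using congrFun hc i

theorem step_le_L {c : Fin n → ℕ} (hc : ∀ j, c j ≤ P.L j) (i j : Fin n) :
    P.step c i j ≤ P.L j := by
  by_cases h : c i < P.L i ∧ ∀ j, j ≠ i → P.loc j (c j) ≠ P.loc i (c i + 1)
  · rcases eq_or_ne j i with rfl | hji
    · simpa [P.step_eq_update h] using h.1
    · simpa [P.step_apply_of_ne hji] using hc j
  · simpa [(P.step_eq_self_iff).2 h] using hc j

theorem Reachable.le_L {P : OTI V n} {c : Fin n → ℕ} (hc : P.Reachable c) (i : Fin n) :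
    c i ≤ P.L i := by
  obtain ⟨e, k, rfl⟩ := hc
  induction k generalizing i with
  | zero => exact Nat.zero_le _
  | succ k ih => exact P.step_le_L ih _ i

theorem step_L (i : Fin n) : P.step P.L i = P.L :=
  (P.step_eq_self_iff).2 fun h => lt_irrefl _ h.1

theorem exists_iterate_step_eq_self (i : Fin n) (c : Fin n → ℕ) :
    ∃ m, P.step ((P.step · i)^[m] c) i = (P.step · i)^[m] c := by
  induction h : P.L i - c i generalizing c with
  | zero =>
    refine ⟨0, (P.step_eq_self_iff).2 fun hc => ?_⟩
    simp only [Function.iterate_zero, id_eq] at hc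
    omega
  | succ d ih =>
    by_cases hc : P.step c i = c
    · exact ⟨0, hc⟩
    · have hlt : c i < P.L i ∧ ∀ j, j ≠ i → P.loc j (c j) ≠ P.loc i (c i + 1) := by
        simpa [step_eq_self_iff] using hc
      obtain ⟨m, hm⟩ := ih (P.step c i) (by simp [P.step_eq_update hlt]; omega)
      exact ⟨m + 1, by rwa [Function.iterate_succ_apply]⟩

theorem run_const (i : Fin n) (k : ℕ) : P.run (fun _ => i) k = (P.step · i)^[k] 0 := by
  induction k with
  | zero => rfl
  | succ k ih => rw [Function.iterate_succ_apply', ← ih]; rfl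

theorem iterate_step_apply_of_ne {i j : Fin n} (h : j ≠ i) (c : Fin n → ℕ) (m : ℕ) :
    (P.step · i)^[m] c j = c j := by
  induction m generalizing c with
  | zero => rfl
  | succ m ih => rw [Function.iterate_succ_apply, ih, P.step_apply_of_ne h]

theorem run_congr {e e' : ℕ → Fin n} {k : ℕ} (h : ∀ m < k, e m = e' m) :
    P.run e k = P.run e' k := by
  induction k with
  | zero => rfl
  | succ k ih =>
    simp only [run]
    rw [ih fun m hm => h m (by omega), h k (by omega)]

theorem run_eq_of_step_eq_self {c : Fin n → ℕ} (hfix : ∀ i, P.step c i = c) {e : ℕ → Fin n}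
    {k : ℕ} (hk : P.run e k = c) {m : ℕ} (hkm : k ≤ m) : P.run e m = c := by
  induction m, hkm using Nat.le_induction with
  | base => exact hk
  | succ m _ ih => simp only [run, ih, hfix]

theorem fair_ofNat [NeZero n] : Fair fun k => Fin.ofNat n k := by
  intro i k
  refine ⟨n * k + i, ?_, ?_⟩
  · nlinarith [NeZero.one_le (n := n)]
  · ext
    simp [Nat.mod_eq_of_lt i.isLt]

theorem Fair.of_eq_of_le {e e' : ℕ → Fin n} (he : Fair e) {k : ℕ}
    (h : ∀ m, k ≤ m → e' m = e m) : Fair e' := by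
  intro i j
  obtain ⟨m, hm, hem⟩ := he i (max j k)
  exact ⟨m, le_of_max_le_left hm, (h m (le_of_max_le_right hm)).trans hem⟩

/-- Continue the execution reaching `c` round-robin: it stays at `c` forever, whereas termination
would leave it at the goal configuration, which is also fixed by every activation. -/
theorem not_feasible_of_reachable_stuck {c : Fin n → ℕ} (hc : P.Reachable c)
    (hfix : ∀ i, P.step c i = c) {i : Fin n} (hi : c i ≠ P.L i) : ¬ P.Feasible := by
  intro hF
  obtain ⟨e, k, hk⟩ := hc
  have : NeZero n := NeZero.of_pos i.pos
  set e' : ℕ → Fin n := fun m => if m < k then e m else Fin.ofNat n m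
  have hfair : Fair e' := fair_ofNat.of_eq_of_le (k := k) fun m hm => if_neg (by omega)
  have hk' : P.run e' k = c := (P.run_congr fun m hm => (if_pos hm).symm).symm.trans hk
  obtain ⟨m, hm⟩ := hF e' hfair
  have hgoal : P.run e' (max m k) = P.L :=
    P.run_eq_of_step_eq_self P.step_L (funext hm) (le_max_left m k)
  have hstuck : P.run e' (max m k) = c := P.run_eq_of_step_eq_self hfix hk' (le_max_right m k)
  exact hi (congrFun (hstuck.symm.trans hgoal) i)

variable {G : SimpleGraph V}

theorem reflGen_pmStep_step (hadj : ∀ i t, t < P.L i → G.Adj (P.loc i t) (P.loc i (t + 1)))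
    (c : Fin n → ℕ) (i : Fin n) :
    Relation.ReflGen (PMStep G) (fun j => P.loc j (c j)) (fun j => P.loc j (P.step c i j)) := by
  by_cases h : c i < P.L i ∧ ∀ j, j ≠ i → P.loc j (c j) ≠ P.loc i (c i + 1)
  · refine .single ⟨i, ?_, fun j hj => ?_, fun j hj => ?_⟩
    · simpa [P.step_eq_update h] using hadj i (c i) h.1
    · simp only [P.step_apply_of_ne hj]
    · simpa [P.step_eq_update h] using h.2 j hj
  · rw [(P.step_eq_self_iff).2 h]

theorem reflTransGen_pmStep_run (hadj : ∀ i t, t < P.L i → G.Adj (P.loc i t) (P.loc i (t + 1)))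
    (e : ℕ → Fin n) (k : ℕ) :
    Relation.ReflTransGen (PMStep G) (fun i => P.loc i 0) (fun i => P.loc i (P.run e k i)) := by
  induction k with
  | zero => exact .refl
  | succ k ih =>
    exact ih.trans (P.reflGen_pmStep_step hadj (P.run e k) (e k)).to_reflTransGen

theorem Feasible.pmSolvable {P : OTI V n} {s g : Fin n → V} (hP : P.OnGraph G s g)
    (hF : P.Feasible) : PMSolvable G s g := by
  obtain ⟨hs, hg, hadj⟩ := hP
  rcases Nat.eq_zero_or_pos n with rfl | hn
  · exact Subsingleton.elim s g ▸ .refl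
  have : NeZero n := NeZero.of_pos hn
  obtain ⟨k, hk⟩ := hF _ fair_ofNat
  have hrun := P.reflTransGen_pmStep_run hadj (fun k => Fin.ofNat n k) k
  simp only [hk, hs, hg] at hrun
  exact hrun

end OTI

theorem pmStep_fin_two {V : Type} {G : SimpleGraph V} {c c' : Fin 2 → V} (i : Fin 2)
    (hadj : G.Adj (c i) (c' i)) (hother : c' (1 - i) = c (1 - i)) (hfree : c (1 - i) ≠ c' i) :
    PMStep G c c' := by
  refine ⟨i, hadj, fun j hj => ?_, fun j hj => ?_⟩ <;>
    obtain rfl : j = 1 - i := by fin_cases i <;> fin_cases j <;> simp_all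
  exacts [hother, hfree]

abbrev starGraph : SimpleGraph (Fin 4) := SimpleGraph.fromRel fun a _ => a = 1

theorem starGraph_eq_one_of_adj_zero {x : Fin 4} (h : starGraph.Adj x 0) : x = 1 := by
  revert h
  fin_cases x <;> simp [SimpleGraph.fromRel_adj]

theorem starGraph_pmSolvable : PMSolvable starGraph ![0, 2] ![3, 1] := by
  refine .head (pmStep_fin_two (c' := ![1, 2]) 0 ?_ rfl ?_)
    (.head (pmStep_fin_two (c' := ![3, 2]) 0 ?_ rfl ?_)
    (.single (pmStep_fin_two (c' := ![3, 1]) 1 ?_ rfl ?_))) <;> simp [SimpleGraph.fromRel_adj]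

theorem starGraph_not_feasible (P : OTI (Fin 4) 2) (hP : P.OnGraph starGraph ![0, 2] ![3, 1]) :
    ¬ P.Feasible := by
  obtain ⟨hs, hg, hadj⟩ := hP
  have hs0 : P.loc 0 0 = 0 := hs 0
  have hg0 : P.loc 0 (P.L 0) = 3 := hg 0
  have hg1 : P.loc 1 (P.L 1) = 1 := hg 1
  have hL0 : 0 < P.L 0 := Nat.pos_of_ne_zero fun h => by simp [h, hs0] at hg0
  have hnext0 : P.loc 0 1 = 1 :=
    starGraph_eq_one_of_adj_zero (by simpa [hs0] using (hadj 0 0 hL0).symm)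
  obtain ⟨m, hm⟩ := P.exists_iterate_step_eq_self 1 0
  set c := (P.step · 1)^[m] 0 with hc_def
  have hreach : P.Reachable c := ⟨_, m, P.run_const 1 m⟩
  have hc0 : c 0 = 0 := by
    simpa [hc_def] using P.iterate_step_apply_of_ne (j := 0) (by decide) 0 m
  have hcenter : P.loc 1 (c 1) = 1 := by
    rcases (hreach.le_L 1).lt_or_eq with hlt | heq
    · have hblocked : ∃ j, j ≠ 1 ∧ P.loc j (c j) = P.loc 1 (c 1 + 1) := by
        simpa [P.step_eq_self_iff, hlt] using hm
      obtain ⟨j, hj, hocc⟩ := hblocked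
      obtain rfl : j = 0 := by fin_cases j <;> simp_all
      rw [hc0, hs0] at hocc
      exact starGraph_eq_one_of_adj_zero (hocc ▸ hadj 1 (c 1) hlt)
    · rw [heq, hg1]
  have hfix : ∀ i, P.step c i = c := by
    refine Fin.forall_fin_two.2 ⟨(P.step_eq_self_iff).2 fun h => h.2 1 (by decide) ?_, hm⟩
    rw [hc0, hcenter, hnext0]
  exact P.not_feasible_of_reachable_stuck hreach hfix (i := 0) (by omega)

/-- every OTIMAPP instance with a feasible solution is PM-solvable, and the
star instance (center `1` with leaves `0,2,3`; agent 0 from `0` to `3`, agent 1 from `2` to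
`1`) is PM-solvable but has no feasible OTIMAPP solution. -/
theorem otimapp_solvable_imp_pm_and_not_conversely :
    (∀ (V : Type) (n : ℕ) (G : SimpleGraph V) (s g : Fin n → V),
      Function.Injective s → Function.Injective g →
      (∃ P : OTI V n, P.OnGraph G s g ∧ P.Feasible) → PMSolvable G s g) ∧
    (Function.Injective (![0, 2] : Fin 2 → Fin 4) ∧
     Function.Injective (![3, 1] : Fin 2 → Fin 4) ∧
     PMSolvable (SimpleGraph.fromRel fun a _ => a = (1 : Fin 4)) ![0, 2] ![3, 1] ∧
     ¬ ∃ P : OTI (Fin 4) 2,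
        P.OnGraph (SimpleGraph.fromRel fun a _ => a = (1 : Fin 4)) ![0, 2] ![3, 1] ∧
        P.Feasible) :=
  ⟨fun _ _ _ _ _ _ _ ⟨_, hP, hF⟩ => hF.pmSolvable hP, by decide, by decide,
    starGraph_pmSolvable, fun ⟨P, hP, hF⟩ => starGraph_not_feasible P hP hF⟩
end

section
/- Every instance solvable as a pebble motion problem is solvable as MAPF, and there exists an instance (agents arranged on a cycle graph with all vertices occupied, goals a rotation of the starts) that is MAPF-solvable but not PM-solvable. -/
open scoped Classical

/-- One MAPF operation: every agent simultaneously stays or moves to an adjacent vertex,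
with no vertex conflict and no edge (swap) conflict. -/
def MAPFStep {V : Type} {n : ℕ} (G : SimpleGraph V) (c c' : Fin n → V) : Prop :=
  Function.Injective c' ∧ (∀ i, c' i = c i ∨ G.Adj (c i) (c' i)) ∧
    ∀ i j : Fin n, i ≠ j → ¬(c' i = c j ∧ c' j = c i)

lemma pm_step_aux {V : Type} {n : ℕ} {G : SimpleGraph V} {c c' : Fin n → V}
    (hc : Function.Injective c) (h : PMStep G c c') :
    Function.Injective c' ∧ MAPFStep G c c' := by
  obtain ⟨i, hadj, hfix, hvac⟩ := h
  have hinj : Function.Injective c' := by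
    intro j k hjk
    by_contra hne
    rcases eq_or_ne j i with rfl | hji
    · exact hvac k (Ne.symm hne) ((hfix k (Ne.symm hne)) ▸ hjk.symm)
    · rcases eq_or_ne k i with rfl | hki
      · exact hvac j hji ((hfix j hji) ▸ hjk)
      · exact hne (hc ((hfix j hji) ▸ (hfix k hki) ▸ hjk))
  refine ⟨hinj, hinj, ?_, ?_⟩
  · intro j
    rcases eq_or_ne j i with rfl | hji
    · exact Or.inr hadj
    · exact Or.inl (hfix j hji)
  · rintro j k hjk ⟨h1, h2⟩
    rcases eq_or_ne j i with rfl | hji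
    · exact hvac k (Ne.symm hjk) h1.symm
    · rcases eq_or_ne k i with rfl | hki
      · exact hvac j hji h2.symm
      · exact hjk (hc (((hfix j hji).symm.trans h1)))

/-- every PM-solvable instance is MAPF-solvable, and the fully occupied
3-cycle with goals a rotation of the starts is MAPF-solvable but not PM-solvable. -/
theorem pm_solvable_imp_mapf_and_not_conversely :
    (∀ (V : Type) (n : ℕ) (G : SimpleGraph V) (s g : Fin n → V),
      Function.Injective s →
      Relation.ReflTransGen (PMStep G) s g → Relation.ReflTransGen (MAPFStep G) s g) ∧
    (Relation.ReflTransGen (MAPFStep (⊤ : SimpleGraph (Fin 3))) id (fun i => i + 1) ∧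
     ¬ Relation.ReflTransGen (PMStep (⊤ : SimpleGraph (Fin 3))) id (fun i => i + 1)) := by
  refine ⟨?_, ?_, ?_⟩
  · intro V n G s g hs h
    have key : Function.Injective g ∧ Relation.ReflTransGen (MAPFStep G) s g := by
      induction h with
      | refl => exact ⟨hs, Relation.ReflTransGen.refl⟩
      | tail _ hbc ih =>
        obtain ⟨hinj, hstep⟩ := pm_step_aux ih.1 hbc
        exact ⟨hinj, ih.2.tail hstep⟩
    exact key.2
  · refine Relation.ReflTransGen.single ?_
    refine ⟨?_, ?_, ?_⟩
    · decide
    · decide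
    · decide
  · intro h
    rcases Relation.ReflTransGen.cases_head h with heq | ⟨c, hstep, _⟩
    · exact absurd (congrFun heq 0) (by decide)
    · obtain ⟨i, hadj, hfix, hvac⟩ := hstep
      have hne : c i ≠ i := ((SimpleGraph.top_adj _ _).mp hadj : (i:Fin 3) ≠ c i).symm
      exact hvac (c i) hne rfl
end

section
/- For a fixed edge (u,v) appearing in agent a_i's path and a collection of existing fragments closed in the tables T_from and T_to, every new fragment involving a_i's traversal of (u,v) is of exactly one of four forms: a singleton fragment ((i),(j)); an existing fragment ending at u extended by a_i at the end; an existing fragment starting from v extended by a_i at the front; or the concatenation of an agent-disjoint pair of fragments, one ending at u and one starting from v, joined through a_i. -/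
open scoped Classical

namespace OTI

variable {V : Type} {n : ℕ} {P : OTI V n} {l₁ l₂ : List (Fin n × ℕ)}

theorem IsFragment.of_append_left (h : P.IsFragment (l₁ ++ l₂)) (h₁ : l₁ ≠ []) :
    P.IsFragment l₁ :=
  ⟨h₁, h.2.1.sublist ((List.sublist_append_left _ _).map _),
    fun p hp => h.2.2.1 p (List.mem_append_left _ hp), h.2.2.2.left_of_append⟩

theorem IsFragment.of_append_right (h : P.IsFragment (l₁ ++ l₂)) (h₂ : l₂ ≠ []) :
    P.IsFragment l₂ :=
  ⟨h₂, h.2.1.sublist ((List.sublist_append_right _ _).map _),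
    fun p hp => h.2.2.1 p (List.mem_append_right _ hp), h.2.2.2.right_of_append⟩

theorem IsFragment.agent_ne_of_append (h : P.IsFragment (l₁ ++ l₂)) :
    ∀ p ∈ l₁, ∀ q ∈ l₂, p.1 ≠ q.1 := by
  have hnodup := h.2.1
  rw [List.map_append, List.nodup_append] at hnodup
  exact fun p hp q hq => hnodup.2.2 _ (List.mem_map_of_mem hp) _ (List.mem_map_of_mem hq)

theorem IsFragment.fragEnd_eq_fragStart (h : P.IsFragment (l₁ ++ l₂)) (h₁ : l₁ ≠ [])
    (h₂ : l₂ ≠ []) : P.fragEnd l₁ = P.fragStart l₂ := by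
  rw [fragEnd, fragStart, List.getLast?_eq_some_getLast h₁, List.head?_eq_some_head h₂]
  exact congrArg some (h.2.2.2.rel_getLast_head_of_append h₁ h₂)

end OTI

/-- any fragment containing agent `i`'s traversal of the edge
`(π_i[j], π_i[j+1])` is of exactly one of four forms: the singleton `((i),(j))`;
a fragment ending at `π_i[j]` extended by `a_i` at the end; a fragment starting from
`π_i[j+1]` extended by `a_i` at the front; or an agent-disjoint pair of such fragments
joined through `a_i`. -/
theorem fragment_four_forms {V : Type} {n : ℕ} (P : OTI V n) (i : Fin n) (j : ℕ)
    (l : List (Fin n × ℕ)) (hl : P.IsFragment l) (hmem : (i, j) ∈ l) :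
    l = [(i, j)] ∨
    (∃ l1, l1 ≠ [] ∧ l = l1 ++ [(i, j)] ∧ P.IsFragment l1 ∧
      P.fragEnd l1 = some (P.loc i j) ∧ ∀ p ∈ l1, p.1 ≠ i) ∨
    (∃ l2, l2 ≠ [] ∧ l = (i, j) :: l2 ∧ P.IsFragment l2 ∧
      P.fragStart l2 = some (P.loc i (j + 1)) ∧ ∀ p ∈ l2, p.1 ≠ i) ∨
    (∃ l1 l2, l1 ≠ [] ∧ l2 ≠ [] ∧ l = l1 ++ (i, j) :: l2 ∧
      P.IsFragment l1 ∧ P.IsFragment l2 ∧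
      P.fragEnd l1 = some (P.loc i j) ∧ P.fragStart l2 = some (P.loc i (j + 1)) ∧
      (∀ p ∈ l1, p.1 ≠ i) ∧ (∀ p ∈ l2, p.1 ≠ i) ∧
      ∀ p ∈ l1, ∀ q ∈ l2, p.1 ≠ q.1) := by
  obtain ⟨l₁, l₂, rfl⟩ := List.append_of_mem hmem
  have hcons : P.IsFragment ([(i, j)] ++ l₂) := hl.of_append_right (List.cons_ne_nil _ _)
  have hi₁ : ∀ p ∈ l₁, p.1 ≠ i := fun p hp =>
    hl.agent_ne_of_append p hp (i, j) List.mem_cons_self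
  have hi₂ : ∀ q ∈ l₂, q.1 ≠ i := fun q hq =>
    (hcons.agent_ne_of_append (i, j) List.mem_cons_self q hq).symm
  have hdisj : ∀ p ∈ l₁, ∀ q ∈ l₂, p.1 ≠ q.1 := fun p hp q hq =>
    hl.agent_ne_of_append p hp q (List.mem_cons_of_mem _ hq)
  have hleft : l₁ ≠ [] → P.IsFragment l₁ ∧ P.fragEnd l₁ = some (P.loc i j) := fun h₁ =>
    ⟨hl.of_append_left h₁, hl.fragEnd_eq_fragStart h₁ (List.cons_ne_nil _ _)⟩
  have hright : l₂ ≠ [] → P.IsFragment l₂ ∧ P.fragStart l₂ = some (P.loc i (j + 1)) :=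
    fun h₂ => ⟨hcons.of_append_right h₂,
      (hcons.fragEnd_eq_fragStart (List.cons_ne_nil _ _) h₂).symm⟩
  rcases eq_or_ne l₁ [] with rfl | h₁ <;> rcases eq_or_ne l₂ [] with rfl | h₂
  · exact Or.inl rfl
  · exact Or.inr <| Or.inr <| Or.inl ⟨l₂, h₂, rfl, (hright h₂).1, (hright h₂).2, hi₂⟩
  · exact Or.inr <| Or.inl ⟨l₁, h₁, rfl, (hleft h₁).1, (hleft h₁).2, hi₁⟩
  · exact Or.inr <| Or.inr <| Or.inr ⟨l₁, l₂, h₁, h₂, rfl, (hleft h₁).1, (hright h₂).1,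
      (hleft h₁).2, (hright h₂).2, hi₁, hi₂, hdisj⟩
end

section
/- The fragment-based deadlock-detection algorithm, which processes paths one at a time and for each edge registers the singleton fragment and all extensions/concatenations with previously stored fragments, returns a potential cyclic deadlock if one exists in the input set of paths, and otherwise returns NONE; correctness is proved by induction on the number of processed paths. -/
open scoped Classical

namespace OTI

variable {V : Type} {n : ℕ}

/-- Processing one edge `(π_i[j], π_i[j+1])` of agent `i`'s path: register the singleton
fragment, all extensions of stored fragments ending at `π_i[j]` or starting from `π_i[j+1]`,
and all concatenations of agent-disjoint pairs joined through `a_i`. -/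
def processEdge [DecidableEq V] (P : OTI V n) (i : Fin n) (j : ℕ)
    (fs : List (List (Fin n × ℕ))) : List (List (Fin n × ℕ)) :=
  let single : List (Fin n × ℕ) := [(i, j)]
  let toU := fs.filter fun l =>
    decide (P.fragEnd l = some (P.loc i j)) && !((l.map Prod.fst).contains i)
  let fromV := fs.filter fun l =>
    decide (P.fragStart l = some (P.loc i (j + 1))) && !((l.map Prod.fst).contains i)
  fs ++ [single] ++ toU.map (· ++ single) ++ fromV.map (single ++ ·) ++
    (toU.flatMap fun l1 =>
      ((fromV.filter fun l2 =>
          (l1.map Prod.fst).all fun a => !((l2.map Prod.fst).contains a)).map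
        fun l2 => l1 ++ single ++ l2))

/-- Processing all edges of agent `i`'s path. -/
def processPath [DecidableEq V] (P : OTI V n) (i : Fin n)
    (fs : List (List (Fin n × ℕ))) : List (List (Fin n × ℕ)) :=
  (List.range (P.L i)).foldl (fun acc j => P.processEdge i j acc) fs

/-- Processing all paths, one at a time. -/
def allFragments [DecidableEq V] (P : OTI V n) : List (List (Fin n × ℕ)) :=
  (List.finRange n).foldl (fun acc i => P.processPath i acc) []

/-- The detection algorithm: return a registered fragment that ends at its own start
vertex (a potential cyclic deadlock), or `none`. -/
def detect [DecidableEq V] (P : OTI V n) : Option (List (Fin n × ℕ)) :=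
  P.allFragments.find? fun l => decide (P.fragStart l = P.fragEnd l ∧ l ≠ [])

end OTI

/-! After the edges of `a_1, …, a_{i-1}` and the first `j` edges of `a_i` have been processed,
the stored list contains exactly the fragments all of whose (agent, clock) pairs have been
processed. Processing the edge `(i, j)` preserves this: a fragment through `(i, j)` splits as
`s ++ (i, j) :: t`, where `s` and `t` avoid agent `i` because agents are distinct; so `s` and `t`
are earlier fragments, ending at `π_i[j]` and starting at `π_i[j+1]` with disjoint agents, which
are exactly the lists that the step extends and concatenates. Hence at the end every fragment is
stored, and `detect` searches all of them for one that closes up. -/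

theorem List.foldl_induction_append_singleton {α β : Type*} {Q : List α → β → Prop}
    {f : β → α → β} {b : β} (xs : List α) (hb : Q [] b)
    (hstep : ∀ pre a acc, a ∈ xs → Q pre acc → Q (pre ++ [a]) (f acc a)) :
    Q xs (xs.foldl f b) := by
  induction xs using List.reverseRecOn with
  | nil => exact hb
  | append_singleton xs a ih =>
    rw [List.foldl_append, List.foldl_cons, List.foldl_nil]
    exact hstep _ _ _ (by simp) (ih fun pre a' acc ha' => hstep pre a' acc (by simp [ha']))

namespace OTI

variable {V : Type} {n : ℕ}

section
variable (P : OTI V n)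

theorem isFragment_iff {l : List (Fin n × ℕ)} :
    P.IsFragment l ↔ l ≠ [] ∧ (l.map Prod.fst).Nodup ∧ (∀ p ∈ l, p.2 < P.L p.1) ∧
      l.IsChain fun p q => P.loc p.1 (p.2 + 1) = P.loc q.1 q.2 :=
  Iff.rfl

theorem isFragment_singleton {i : Fin n} {j : ℕ} : P.IsFragment [(i, j)] ↔ j < P.L i := by
  simp [isFragment_iff]

theorem fragEnd_eq_fragStart_iff {a b : List (Fin n × ℕ)} (ha : a ≠ []) (hb : b ≠ []) :
    P.fragEnd a = P.fragStart b ↔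
      ∀ x ∈ a.getLast?, ∀ y ∈ b.head?, P.loc x.1 (x.2 + 1) = P.loc y.1 y.2 := by
  obtain ⟨x, hx⟩ := Option.isSome_iff_exists.1 (List.getLast?_isSome.2 ha)
  obtain ⟨y, b, rfl⟩ := List.exists_cons_of_ne_nil hb
  simp [fragEnd, fragStart, hx]

theorem isFragment_append {a b : List (Fin n × ℕ)} (ha : a ≠ []) (hb : b ≠ []) :
    P.IsFragment (a ++ b) ↔ P.IsFragment a ∧ P.IsFragment b ∧ P.fragEnd a = P.fragStart b ∧
      (a.map Prod.fst).Disjoint (b.map Prod.fst) := by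
  simp only [isFragment_iff, P.fragEnd_eq_fragStart_iff ha hb, List.map_append,
    List.nodup_append', List.forall_mem_append, List.isChain_append]
  simp only [ne_eq, List.append_eq_nil_iff, ha, hb, not_false_eq_true, and_false, true_and]
  tauto

theorem isFragment_append_cons {s t : List (Fin n × ℕ)} {i : Fin n} {j : ℕ} :
    P.IsFragment (s ++ (i, j) :: t) ↔ j < P.L i ∧
      (s = [] ∨ P.IsFragment s ∧ P.fragEnd s = some (P.loc i j)) ∧
      (t = [] ∨ P.IsFragment t ∧ P.fragStart t = some (P.loc i (j + 1))) ∧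
      i ∉ s.map Prod.fst ∧ i ∉ t.map Prod.fst ∧ (s.map Prod.fst).Disjoint (t.map Prod.fst) := by
  have hcons : (i, j) :: t = [(i, j)] ++ t := rfl
  have hend : P.fragEnd [(i, j)] = some (P.loc i (j + 1)) := rfl
  have hstart : P.fragStart ((i, j) :: t) = some (P.loc i j) := rfl
  rcases eq_or_ne s [] with rfl | hs <;> rcases eq_or_ne t [] with rfl | ht
  · simp [isFragment_singleton]
  on_goal 1 => rw [List.nil_append, hcons, P.isFragment_append (by simp) ht, hend]
  on_goal 2 => rw [P.isFragment_append hs (by simp), hstart]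
  on_goal 3 => rw [hcons, P.isFragment_append hs (by simp), P.isFragment_append (by simp) ht,
    ← hcons, hstart, hend]
  all_goals
    simp only [isFragment_singleton, List.map_cons, List.map_nil, List.singleton_disjoint,
      List.disjoint_cons_right, List.disjoint_nil_left,
      List.disjoint_nil_right, List.not_mem_nil, eq_comm, not_false_eq_true, and_true]
    tauto

theorem mem_processEdge_iff [DecidableEq V] {i : Fin n} {j : ℕ} {fs : List (List (Fin n × ℕ))}
    {l : List (Fin n × ℕ)} :
    l ∈ P.processEdge i j fs ↔ l ∈ fs ∨ ∃ s t, l = s ++ (i, j) :: t ∧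
      (s = [] ∨ s ∈ fs ∧ P.fragEnd s = some (P.loc i j)) ∧
      (t = [] ∨ t ∈ fs ∧ P.fragStart t = some (P.loc i (j + 1))) ∧
      i ∉ s.map Prod.fst ∧ i ∉ t.map Prod.fst ∧ (s.map Prod.fst).Disjoint (t.map Prod.fst) := by
  simp only [processEdge, List.mem_append, List.mem_map, List.mem_flatMap, List.mem_filter,
    List.all_eq_true, Bool.and_eq_true, Bool.not_eq_true', decide_eq_true_eq,
    decide_eq_false_iff_not, List.elem_eq_mem, List.mem_cons, List.not_mem_nil, or_false,
    List.Disjoint]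
  constructor
  · rintro ((((h | rfl) | ⟨s, ⟨hs, he, hi⟩, rfl⟩) | ⟨t, ⟨ht, hb, hi⟩, rfl⟩) |
      ⟨s, ⟨hs, he, hi⟩, t, ⟨⟨ht, hb, hi'⟩, hd⟩, rfl⟩)
    · exact Or.inl h
    · exact Or.inr ⟨[], [], rfl, by simp⟩
    · exact Or.inr ⟨s, [], by simp, Or.inr ⟨hs, he⟩, by simp [hi]⟩
    · exact Or.inr ⟨[], t, rfl, by simp [ht, hb, hi]⟩
    · refine Or.inr ⟨s, t, by simp, Or.inr ⟨hs, he⟩, Or.inr ⟨ht, hb⟩, hi, hi', ?_⟩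
      exact fun a has hat => hd a has hat
  · rintro (h | ⟨s, t, rfl, rfl | ⟨hs, he⟩, rfl | ⟨ht, hb⟩, hi, hi', hd⟩)
    · exact Or.inl (Or.inl (Or.inl (Or.inl h)))
    · exact Or.inl (Or.inl (Or.inl (Or.inr rfl)))
    · exact Or.inl (Or.inr ⟨t, ⟨ht, hb, hi'⟩, rfl⟩)
    · exact Or.inl (Or.inl (Or.inr ⟨s, ⟨hs, he, hi⟩, by simp⟩))
    · exact Or.inr ⟨s, ⟨hs, he, hi⟩, t, ⟨⟨ht, hb, hi'⟩, fun a has hat => hd has hat⟩, by simp⟩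

def Enumerates (R : Fin n × ℕ → Prop) (fs : List (List (Fin n × ℕ))) : Prop :=
  ∀ l, l ∈ fs ↔ P.IsFragment l ∧ ∀ p ∈ l, R p

end

variable {P : OTI V n}

theorem Enumerates.congr {R R' : Fin n × ℕ → Prop} {fs : List (List (Fin n × ℕ))}
    (h : P.Enumerates R fs) (hR : ∀ p : Fin n × ℕ, p.2 < P.L p.1 → (R p ↔ R' p)) :
    P.Enumerates R' fs := fun l =>
  (h l).trans <| and_congr_right fun hl => forall₂_congr fun p hp => hR p (hl.2.2.1 p hp)

theorem Enumerates.processEdge [DecidableEq V] {R : Fin n × ℕ → Prop} {i : Fin n} {j : ℕ}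
    {fs : List (List (Fin n × ℕ))} (h : P.Enumerates R fs) (hj : j < P.L i) :
    P.Enumerates (fun p => R p ∨ p = (i, j)) (P.processEdge i j fs) := by
  intro l
  rw [mem_processEdge_iff]
  constructor
  · rintro (hl | ⟨s, t, rfl, hs, ht, hi, hi', hd⟩)
    · exact ((h l).1 hl).imp_right fun hR p hp => Or.inl (hR p hp)
    · have hsR : ∀ p ∈ s, R p := by
        rcases hs with rfl | ⟨hs, -⟩
        exacts [by simp, ((h s).1 hs).2]
      have htR : ∀ p ∈ t, R p := by
        rcases ht with rfl | ⟨ht, -⟩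
        exacts [by simp, ((h t).1 ht).2]
      refine ⟨P.isFragment_append_cons.2 ⟨hj, hs.imp_right fun hs => ⟨((h s).1 hs.1).1, hs.2⟩,
        ht.imp_right fun ht => ⟨((h t).1 ht.1).1, ht.2⟩, hi, hi', hd⟩, fun p hp => ?_⟩
      rw [List.mem_append, List.mem_cons] at hp
      rcases hp with hp | rfl | hp
      exacts [Or.inl (hsR p hp), Or.inr rfl, Or.inl (htR p hp)]
  · rintro ⟨hl, hR⟩
    by_cases hij : (i, j) ∈ l
    · obtain ⟨s, t, rfl⟩ := List.append_of_mem hij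
      obtain ⟨-, hs, ht, hi, hi', hd⟩ := P.isFragment_append_cons.1 hl
      -- `s` and `t` avoid agent `i`, so all their pairs already satisfy `R`.
      have mem_fs : ∀ u, (∀ p ∈ u, p ∈ s ++ (i, j) :: t) → i ∉ u.map Prod.fst →
          P.IsFragment u → u ∈ fs := fun u hu hiu hfu =>
        (h u).2 ⟨hfu, fun p hp => (hR p (hu p hp)).resolve_right
          fun hpij => hiu (List.mem_map_of_mem (hpij ▸ hp))⟩
      refine Or.inr ⟨s, t, rfl,
        hs.imp_right fun ⟨hs, he⟩ => ⟨mem_fs s (fun p => List.mem_append_left _) hi hs, he⟩,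
        ht.imp_right fun ⟨ht, hb⟩ =>
          ⟨mem_fs t (fun p hp => List.mem_append_right _ (List.mem_cons_of_mem _ hp)) hi' ht, hb⟩,
        hi, hi', hd⟩
    · exact Or.inl <| (h l).2
        ⟨hl, fun p hp => (hR p hp).resolve_right (ne_of_mem_of_not_mem hp hij)⟩

theorem Enumerates.processPath [DecidableEq V] {R : Fin n × ℕ → Prop} {i : Fin n}
    {fs : List (List (Fin n × ℕ))} (h : P.Enumerates R fs) :
    P.Enumerates (fun p => R p ∨ p.1 = i) (P.processPath i fs) := by
  have hrange : P.Enumerates (fun p => R p ∨ p.1 = i ∧ p.2 ∈ List.range (P.L i))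
      (P.processPath i fs) := by
    refine List.foldl_induction_append_singleton
      (Q := fun pre acc => P.Enumerates (fun p => R p ∨ p.1 = i ∧ p.2 ∈ pre) acc)
      _ (h.congr fun p _ => by simp) fun pre j acc hj hacc => ?_
    refine (hacc.processEdge (List.mem_range.1 hj)).congr fun p _ => ?_
    simp only [Prod.ext_iff, List.mem_append, List.mem_singleton]
    tauto
  refine hrange.congr fun p hp => ?_
  simp only [List.mem_range]
  constructor
  · rintro (hR | ⟨rfl, -⟩)
    exacts [Or.inl hR, Or.inr rfl]
  · rintro (hR | rfl)
    exacts [Or.inl hR, Or.inr ⟨rfl, hp⟩]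

variable (P) in
theorem mem_allFragments [DecidableEq V] {l : List (Fin n × ℕ)} :
    l ∈ P.allFragments ↔ P.IsFragment l := by
  have hfin : P.Enumerates (fun p => p.1 ∈ List.finRange n) P.allFragments := by
    refine List.foldl_induction_append_singleton
      (Q := fun pre acc => P.Enumerates (fun p => p.1 ∈ pre) acc) _ (fun l => ?_)
      fun pre i acc _ hacc => ?_
    · simp only [List.not_mem_nil, false_iff, not_and]
      exact fun hl hall => hall _ (List.head_mem hl.1)
    · exact hacc.processPath.congr fun p _ => by simp
  simpa using hfin l

end OTI

/-- the fragment-based deadlock-detection algorithm returns a potential cyclic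
deadlock (a fragment ending at its own start) if one exists in the input set of paths, and
otherwise returns NONE. -/
theorem detect_correct {V : Type} [DecidableEq V] {n : ℕ} (P : OTI V n) :
    (∀ l, P.detect = some l → P.IsFragment l ∧ P.fragStart l = P.fragEnd l) ∧
    (P.detect = none → ∀ l, P.IsFragment l → P.fragStart l ≠ P.fragEnd l) := by
  constructor
  · intro l hdet
    have hfound := List.find?_some hdet
    simp only [decide_eq_true_eq] at hfound
    exact ⟨P.mem_allFragments.1 (List.mem_of_find?_eq_some hdet), hfound.1⟩
  · intro hdet l hl hcyc
    have hnot := List.find?_eq_none.1 hdet l (P.mem_allFragments.2 hl)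
    simp only [decide_eq_true_eq] at hnot
    exact hnot ⟨hcyc, hl.1⟩
end

section
/- When a node N of CP contains a potential cyclic deadlock, any solution satisfying the relaxed sufficient condition that is consistent with N's constraints remains consistent with the constraints of at least one of N's children; i.e., the branching on a detected potential cyclic deadlock is exhaustive. -/
open scoped Classical

/-- A path set respects a constraint set: no agent `c.1` traverses the forbidden directed
edge `(c.2.1, c.2.2)`. -/
def RespectsC {V : Type} {n : ℕ} (P : OTI V n) (C : Finset (Fin n × V × V)) : Prop :=
  ∀ c ∈ C, ∀ t, t < P.L c.1 → ¬(P.loc c.1 t = c.2.1 ∧ P.loc c.1 (t + 1) = c.2.2)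

/-- The relaxed sufficient condition: no use of other agents' goals and no potential
cyclic deadlocks. -/
def Relaxed {V : Type} {n : ℕ} (P : OTI V n) : Prop :=
  (∀ i j : Fin n, i ≠ j → ∀ t, t ≤ P.L i → P.loc i t = P.loc j (P.L j) → t = 0) ∧
  ∀ (k : ℕ) (σ : Fin (k + 1) → Fin n) (t : Fin (k + 1) → ℕ), ¬ P.PotentialCyclic σ t

/-! If every child's constraint were violated by `Pstar`, each agent of the closed fragment would
traverse in `Pstar` the very edge it traverses in `P`. Consecutive edges of the fragment meet
head to tail, so these `Pstar`-edges again form a potential cyclic deadlock (only the clock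
values change), which the relaxed condition forbids. -/

theorem List.IsChain.getElem_add_one_cyclic {α : Type*} {R : α → α → Prop} {a : α} {l : List α}
    (hchain : (a :: l).IsChain R) (hwrap : R ((a :: l).getLast (List.cons_ne_nil a l)) a)
    (m : Fin (l.length + 1)) : R (a :: l)[(m : ℕ)] (a :: l)[((m + 1 : Fin _) : ℕ)] := by
  rcases Fin.eq_castSucc_or_eq_last m with ⟨i, rfl⟩ | rfl
  · have hsucc : ((i.castSucc + 1 : Fin (l.length + 1)) : ℕ) = i + 1 := by
      rw [Fin.val_add_one_of_lt (Fin.castSucc_lt_last i), Fin.val_castSucc]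
    simp only [hsucc, Fin.val_castSucc]
    exact List.isChain_iff_getElem.mp hchain i (by simp)
  · simpa [List.getLast_eq_getElem] using hwrap

namespace OTI

variable {V : Type} {n : ℕ}

def UsesEdge (P : OTI V n) (i : Fin n) (u v : V) : Prop :=
  ∃ t < P.L i, P.loc i t = u ∧ P.loc i (t + 1) = v

theorem IsFragment.exists_potentialCyclic {P : OTI V n} {l : List (Fin n × ℕ)}
    (hfrag : P.IsFragment l) (hclosed : P.fragStart l = P.fragEnd l) :
    ∃ (k : ℕ) (σ : Fin (k + 1) → Fin n) (t : Fin (k + 1) → ℕ),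
      P.PotentialCyclic σ t ∧ ∀ m, (σ m, t m) ∈ l := by
  obtain ⟨hne, hnodup, hlt, hchain⟩ := hfrag
  obtain ⟨a, l, rfl⟩ := List.exists_cons_of_ne_nil hne
  have hwrap : P.loc ((a :: l).getLast (List.cons_ne_nil a l)).1
      (((a :: l).getLast (List.cons_ne_nil a l)).2 + 1) = P.loc a.1 a.2 := by
    simpa [fragStart, fragEnd, List.getLast?_eq_some_getLast (List.cons_ne_nil a l)]
      using hclosed.symm
  refine ⟨l.length, fun m => (a :: l)[(m : ℕ)].1, fun m => (a :: l)[(m : ℕ)].2,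
    ⟨fun i j hij => ?_, fun m => hlt _ (List.getElem_mem _), ?_⟩, fun m => List.getElem_mem _⟩
  · have : ((a :: l).map Prod.fst)[(i : ℕ)]'(by simp [i.is_lt]) =
        ((a :: l).map Prod.fst)[(j : ℕ)]'(by simp [j.is_lt]) := by
      simp only [List.getElem_map]
      exact hij
    exact Fin.ext (hnodup.getElem_inj_iff.mp this)
  · exact List.IsChain.getElem_add_one_cyclic hchain hwrap

theorem PotentialCyclic.of_usesEdge {P Q : OTI V n} {k : ℕ} {σ : Fin (k + 1) → Fin n}
    {t : Fin (k + 1) → ℕ} (hcyc : P.PotentialCyclic σ t)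
    (huse : ∀ m, Q.UsesEdge (σ m) (P.loc (σ m) (t m)) (P.loc (σ m) (t m + 1))) :
    ∃ τ : Fin (k + 1) → ℕ, Q.PotentialCyclic σ τ := by
  choose τ hτL hτstart hτend using huse
  refine ⟨τ, hcyc.1, hτL, fun m => ?_⟩
  rw [hτend, hτstart, hcyc.2.2 m]

end OTI

theorem RespectsC.insert {V : Type} {n : ℕ} {P : OTI V n} {C : Finset (Fin n × V × V)}
    {c : Fin n × V × V} (hC : RespectsC P C) (hc : ¬ P.UsesEdge c.1 c.2.1 c.2.2) :
    RespectsC P (insert c C) := by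
  intro d hd t ht
  rcases Finset.mem_insert.mp hd with rfl | hdC
  · exact fun ⟨hu, hv⟩ => hc ⟨t, ht, hu, hv⟩
  · exact hC d hdC t ht

theorem cp_branching_exhaustive_general {V : Type} {n : ℕ}
    (P Pstar : OTI V n)
    (hrel : Relaxed Pstar) (C : Finset (Fin n × V × V)) (hC : RespectsC Pstar C)
    (l : List (Fin n × ℕ)) (hfrag : P.IsFragment l)
    (hcyc : P.fragStart l = P.fragEnd l) :
    ∃ p ∈ l, RespectsC Pstar
      (insert (p.1, P.loc p.1 p.2, P.loc p.1 (p.2 + 1)) C) := by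
  by_contra! hviolated
  have huse : ∀ p ∈ l, Pstar.UsesEdge p.1 (P.loc p.1 p.2) (P.loc p.1 (p.2 + 1)) :=
    fun p hp => by_contra fun hunused => hviolated p hp (hC.insert hunused)
  obtain ⟨k, σ, t, hPcyc, hmem⟩ := hfrag.exists_potentialCyclic hcyc
  obtain ⟨τ, hPstar_cyc⟩ := hPcyc.of_usesEdge fun m => huse _ (hmem m)
  exact hrel.2 k σ τ hPstar_cyc

/-- exhaustive branching of CP: when the path set of a CP node contains a
potential cyclic deadlock, any relaxed-condition solution consistent with the node's
constraints is consistent with the constraints of at least one of its children. -/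
theorem cp_branching_exhaustive {V : Type} {n : ℕ} (G : SimpleGraph V) (s g : Fin n → V)
    (P Pstar : OTI V n) (hP : P.OnGraph G s g) (hPs : Pstar.OnGraph G s g)
    (hrel : Relaxed Pstar) (C : Finset (Fin n × V × V)) (hC : RespectsC Pstar C)
    (l : List (Fin n × ℕ)) (hfrag : P.IsFragment l)
    (hcyc : P.fragStart l = P.fragEnd l) :
    ∃ p ∈ l, RespectsC Pstar
      (insert (p.1, P.loc p.1 p.2, P.loc p.1 (p.2 + 1)) C) :=
  cp_branching_exhaustive_general P Pstar hrel C hC l hfrag hcyc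
end

section
/- Any biconnected graph can be obtained by starting from a cycle graph H and successively adding 'ears': simple paths P whose two endpoints (and only those) lie in the current graph H; conversely, every graph obtained by this process is biconnected. -/
open scoped Classical

/-- A graph is biconnected: at least 3 vertices, connected, and it remains connected after
removal of any single vertex. -/
def Biconnected {V : Type} [Fintype V] (G : SimpleGraph V) : Prop :=
  3 ≤ Fintype.card V ∧ G.Connected ∧
    ∀ v : V, (G.induce {w : V | w ≠ v}).Connected

/-- The subgraph is a single cycle. -/
def IsCycleSub {V : Type} {G : SimpleGraph V} (H : G.Subgraph) : Prop :=
  ∃ (u : V) (w : G.Walk u u), w.IsCycle ∧ H = w.toSubgraph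

/-- An ear addition: attach a simple path of length ≥ 1 whose two endpoints (and only
those) lie in the current subgraph, and whose edges are all new. -/
def EarStep {V : Type} {G : SimpleGraph V} (H H' : G.Subgraph) : Prop :=
  ∃ (u v : V) (w : G.Walk u v), w.IsPath ∧ 1 ≤ w.length ∧
    u ∈ H.verts ∧ v ∈ H.verts ∧
    (∀ x ∈ w.support, x ≠ u → x ≠ v → x ∉ H.verts) ∧
    (∀ e ∈ w.edges, e ∉ H.edgeSet) ∧
    H' = H ⊔ w.toSubgraph

/-!
Adding a path between two vertices of `S` preserves `ConnectedMinusVertex G S`: a vertex of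
the path other than `z` runs along the path, avoiding `z`, to one of its endpoints, and these
lie in the connected set `S \ {z}`. An edge has the property and a cycle is an edge plus a path,
so the last graph of an ear decomposition has it; for the vertex set of `⊤` it is
biconnectivity.

Conversely, in a biconnected graph every subgraph `K ≠ ⊤` with two vertices has an ear: a
missing edge between vertices of `K`, or else an edge `y x` leaving `K` followed by a path from
`x` that avoids `y` up to its first return to `K`. Each ear adds an edge, so ears added to a
cycle (one exists since no edge is a bridge) reach `⊤`.
-/

section EarDecomposition

open SimpleGraph Walk

variable {V : Type} {G : SimpleGraph V}

def ConnectedMinusVertex (G : SimpleGraph V) (S : Set V) : Prop :=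
  ∀ z, (G.induce (S \ {z})).Connected

theorem ConnectedMinusVertex.nontrivial [Nonempty V] {S : Set V}
    (h : ConnectedMinusVertex G S) : S.Nontrivial := by
  obtain ⟨⟨a, haS, -⟩⟩ := (h (Classical.arbitrary V)).nonempty
  obtain ⟨⟨b, hbS, hba⟩⟩ := (h a).nonempty
  exact ⟨a, haS, b, hbS, fun hab => hba (hab ▸ rfl)⟩

theorem connectedMinusVertex_pair {u v : V} (h : G.Adj u v) : ConnectedMinusVertex G {u, v} := by
  have singleton_connected (x : V) : (G.induce {x}).Connected := by
    rw [induce_singleton_eq_top]; exact connected_top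
  intro z
  by_cases hzu : z = u
  · subst hzu; rw [Set.pair_sdiff_left h.ne]; exact singleton_connected v
  by_cases hzv : z = v
  · subst hzv; rw [Set.pair_sdiff_right h.ne]; exact singleton_connected u
  rw [Set.sdiff_singleton_eq_self (by simp [hzu, hzv])]
  exact induce_pair_connected_of_adj h

theorem SimpleGraph.Walk.IsPath.exists_walk_to_endpoint_avoiding {u v x z : V}
    {w : G.Walk u v} (hw : w.IsPath) (hx : x ∈ w.support) (hxz : x ≠ z) :
    ∃ a, (a = u ∨ a = v) ∧
      ∃ q : G.Walk x a, ∀ t ∈ q.support, t ∈ w.support ∧ t ≠ z := by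
  by_cases hz : z ∈ (w.takeUntil x hx).support
  · refine ⟨v, Or.inr rfl, w.dropUntil x hx, fun t ht =>
      ⟨w.support_dropUntil_subset_support hx ht, ?_⟩⟩
    rintro rfl
    -- `w` passes through `t` before and after `x`.
    have hnodup := hw.support_nodup
    rw [← w.take_spec hx, support_append, List.nodup_append] at hnodup
    rw [← cons_tail_support, List.mem_cons] at ht
    exact hnodup.2.2 _ hz _ (ht.resolve_left hxz.symm) rfl
  · refine ⟨u, Or.inl rfl, (w.takeUntil x hx).reverse, fun t ht => ?_⟩
    rw [support_reverse, List.mem_reverse] at ht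
    exact ⟨w.support_takeUntil_subset_support hx ht, fun htz => hz (htz ▸ ht)⟩

theorem ConnectedMinusVertex.union_support_of_isPath {S : Set V} (hS : ConnectedMinusVertex G S)
    {u v : V} {w : G.Walk u v} (hw : w.IsPath) (hu : u ∈ S) (hv : v ∈ S) :
    ConnectedMinusVertex G (S ∪ {x | x ∈ w.support}) := by
  intro z
  have hsub : S \ {z} ⊆ (S ∪ {x | x ∈ w.support}) \ {z} :=
    Set.sdiff_subset_sdiff_left Set.subset_union_left
  obtain ⟨⟨b, hb⟩⟩ := (hS z).nonempty
  refine induce_connected_of_patches b (hsub hb) ?_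
  rintro x ⟨hxS | hxw, hxz⟩
  · exact ⟨S \ {z}, hsub, hb, ⟨hxS, hxz⟩, (hS z).preconnected _ _⟩
  obtain ⟨a, ha, q, hq⟩ := hw.exists_walk_to_endpoint_avoiding hxw hxz
  have haS : a ∈ S \ {z} :=
    ⟨by rcases ha with rfl | rfl <;> assumption, (hq a q.end_mem_support).2⟩
  have hconn : (G.induce (S \ {z} ∪ {t | t ∈ q.support})).Connected :=
    induce_union_connected (hS z).preconnected q.connected_induce_support.preconnected
      ⟨a, haS, q.end_mem_support⟩
  refine ⟨_, Set.union_subset hsub fun t ht => ?_, Or.inl hb, Or.inr q.start_mem_support,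
    hconn.preconnected _ _⟩
  exact ⟨Or.inr (hq t ht).1, (hq t ht).2⟩

theorem SimpleGraph.Walk.IsCycle.connectedMinusVertex {u : V} {c : G.Walk u u}
    (hc : c.IsCycle) : ConnectedMinusVertex G {x | x ∈ c.support} := by
  cases c with
  | nil => exact absurd hc not_isCycle_nil
  | @cons _ a _ h p =>
    have hsupport : {x | x ∈ (cons h p).support} = {u, a} ∪ {x | x ∈ p.support} := by
      have := p.start_mem_support
      ext x; simp; grind
    rw [hsupport]
    exact (connectedMinusVertex_pair h).union_support_of_isPath
      ((cons_isCycle_iff p h).1 hc).1 (by simp) (by simp)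

theorem IsCycleSub.connectedMinusVertex {K : G.Subgraph} (h : IsCycleSub K) :
    ConnectedMinusVertex G K.verts := by
  obtain ⟨u, c, hc, rfl⟩ := h
  rw [verts_toSubgraph]
  exact hc.connectedMinusVertex

theorem EarStep.connectedMinusVertex {K K' : G.Subgraph} (h : EarStep K K')
    (hK : ConnectedMinusVertex G K.verts) : ConnectedMinusVertex G K'.verts := by
  obtain ⟨u, v, w, hw, -, hu, hv, -, -, rfl⟩ := h
  rw [Subgraph.verts_sup, verts_toSubgraph]
  exact hK.union_support_of_isPath hw hu hv

theorem SimpleGraph.Walk.IsCycle.three_le_card [Fintype V] {u : V} {c : G.Walk u u}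
    (hc : c.IsCycle) : 3 ≤ Fintype.card V := by
  cases c with
  | nil => exact absurd hc not_isCycle_nil
  | cons h p =>
    have := hc.three_le_length
    have := ((cons_isCycle_iff p h).1 hc).1.length_lt
    simp only [length_cons] at *
    omega

theorem exists_ne_ne_of_three_le_card [Fintype V] (hcard : 3 ≤ Fintype.card V) (x y : V) :
    ∃ z, z ≠ x ∧ z ≠ y := by
  obtain ⟨z, -, hz⟩ := Finset.exists_mem_notMem_of_card_lt_card
    (s := {x, y}) (t := Finset.univ) (by have := Finset.card_le_two (a := x) (b := y); simp; omega)
  exact ⟨z, by simpa [not_or] using hz⟩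

theorem Biconnected.of_connectedMinusVertex_univ [Fintype V] (hcard : 3 ≤ Fintype.card V)
    (h : ConnectedMinusVertex G Set.univ) : Biconnected G := by
  have h' (v : V) : (G.induce {w | w ≠ v}).Connected := by
    have : {w | w ≠ v} = Set.univ \ {v} := by ext; simp
    rw [this]
    exact h v
  refine ⟨hcard, (connected_iff G).2 ⟨fun x y => ?_, Fintype.card_pos_iff.1 (by omega)⟩, h'⟩
  obtain ⟨z, hzx, hzy⟩ := exists_ne_ne_of_three_le_card hcard x y
  exact ((h' z).preconnected ⟨x, hzx.symm⟩ ⟨y, hzy.symm⟩).map (Embedding.induce _).toHom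

theorem EarStep.lt {K K' : G.Subgraph} (h : EarStep K K') : K < K' := by
  obtain ⟨u, v, w, -, hlen, -, -, -, hnew, rfl⟩ := h
  obtain ⟨e, he⟩ : ∃ e, e ∈ w.edges :=
    List.length_pos_iff_exists_mem.1 (by rw [length_edges]; omega)
  refine lt_of_le_of_ne le_sup_left fun heq => hnew e he ?_
  rw [heq, Subgraph.edgeSet_sup]
  exact Or.inr (w.mem_edges_toSubgraph.2 he)

theorem exists_earStep_of_not_adj {K : G.Subgraph} {x y : V} (hxy : G.Adj x y)
    (hx : x ∈ K.verts) (hy : y ∈ K.verts) (hK : ¬K.Adj x y) : ∃ K', EarStep K K' :=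
  ⟨_, x, y, hxy.toWalk, hxy.isPath_toWalk, by simp, hx, hy, by simp +contextual,
    by simpa using hK, rfl⟩

theorem exists_isPath_avoiding (hdel : ∀ v : V, (G.induce {w : V | w ≠ v}).Connected)
    {v x y : V} (hx : x ≠ v) (hy : y ≠ v) :
    ∃ p : G.Walk x y, p.IsPath ∧ v ∉ p.support := by
  obtain ⟨q⟩ := (hdel v).preconnected ⟨x, hx⟩ ⟨y, hy⟩
  let p : G.Walk x y := q.map (Embedding.induce _).toHom
  refine ⟨p.bypass, p.bypass_isPath, fun hv => ?_⟩
  obtain ⟨t, -, ht⟩ := List.mem_map.1 (support_map _ q ▸ p.support_bypass_subset_support hv)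
  exact t.2 ht

theorem exists_earStep_of_notMem_verts (hconn : G.Connected)
    (hdel : ∀ v : V, (G.induce {w : V | w ≠ v}).Connected) {K : G.Subgraph}
    (hK : K.verts.Nontrivial) {x : V} (hx : x ∉ K.verts) : ∃ K', EarStep K K' := by
  obtain ⟨a, ha⟩ := hK.nonempty
  obtain ⟨d, -, hy, hx₀⟩ := (hconn.preconnected a x).some.exists_boundary_dart _ ha hx
  obtain ⟨z, hz, hzy⟩ := hK.exists_ne d.fst
  obtain ⟨q, hq, hyq⟩ := exists_isPath_avoiding hdel d.adj.ne.symm hzy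
  obtain ⟨c, hc, hcq, hfirst⟩ := q.exists_mem_support_forall_mem_support_imp_eq
    (q.support.toFinset.filter (· ∈ K.verts)) ⟨z, by simp [hz]⟩
  let r := q.takeUntil c hcq
  have hr : ∀ t ∈ r.support, t ∈ K.verts → t = c := fun t ht htK =>
    hfirst t (by simp [q.support_takeUntil_subset_support hcq ht, htK]) ht
  refine ⟨_, d.fst, c, cons d.adj r, (hq.takeUntil hcq).cons fun h =>
      hyq (q.support_takeUntil_subset_support hcq h), by simp, hy, (Finset.mem_filter.1 hc).2,
    ?_, ?_, rfl⟩
  · intro t ht hty htc htK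
    rw [support_cons, List.mem_cons] at ht
    exact htc (hr t (ht.resolve_left hty) htK)
  · rw [edges_cons]
    rintro e (_ | ⟨_, he⟩) hK
    · exact hx₀ (K.edge_vert (K.adj_symm hK))
    · induction e using Sym2.ind with
      | _ s t =>
        -- both ends of a `K`-edge of `r` would be its only `K`-vertex `c`
        have hs := hr s (r.fst_mem_support_of_mem_edges he) (K.edge_vert hK)
        have ht := hr t (r.snd_mem_support_of_mem_edges he) (K.edge_vert (K.adj_symm hK))
        exact (K.adj_sub hK).ne (hs.trans ht.symm)

theorem exists_earStep (hconn : G.Connected)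
    (hdel : ∀ v : V, (G.induce {w : V | w ≠ v}).Connected) {K : G.Subgraph}
    (hK : K.verts.Nontrivial) (htop : K ≠ ⊤) : ∃ K', EarStep K K' := by
  by_cases hverts : ∃ x, x ∉ K.verts
  · obtain ⟨x, hx⟩ := hverts
    exact exists_earStep_of_notMem_verts hconn hdel hK hx
  push Not at hverts
  obtain ⟨x, y, hxy, hnotK⟩ : ∃ x y, G.Adj x y ∧ ¬K.Adj x y := by
    by_contra! hadj
    exact htop (eq_top_iff.2 ⟨fun x _ => hverts x, fun x y h => hadj x y h⟩)
  exact exists_earStep_of_not_adj hxy (hverts x) (hverts y) hnotK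

theorem Biconnected.exists_isCycle [Fintype V] (hG : Biconnected G) :
    ∃ (u : V) (c : G.Walk u u), c.IsCycle := by
  obtain ⟨hcard, hconn, hdel⟩ := hG
  suffices ¬G.IsAcyclic by simpa [IsAcyclic] using this
  rw [isAcyclic_iff_forall_adj_isBridge]
  intro hbridge
  have : Nontrivial V := Fintype.one_lt_card_iff_nontrivial.1 (by omega)
  obtain ⟨u⟩ := hconn.nonempty
  obtain ⟨v, huv⟩ := hconn.preconnected.exists_adj_of_nontrivial u
  obtain ⟨w, hwu, hwv⟩ := exists_ne_ne_of_three_le_card hcard u v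
  -- `u → w` avoiding `v`, then `w → v` avoiding `u`, never uses the edge `uv`
  obtain ⟨p, -, hvp⟩ := exists_isPath_avoiding hdel huv.ne hwv
  obtain ⟨q, -, huq⟩ := exists_isPath_avoiding hdel hwu huv.ne'
  have := isBridge_iff_forall_walk_mem_edges.1 (hbridge huv) (p.append q)
  rw [edges_append, List.mem_append] at this
  rcases this with h | h
  · exact hvp (p.snd_mem_support_of_mem_edges h)
  · exact huq (q.fst_mem_support_of_mem_edges h)

def IsEarDecomposable (K : G.Subgraph) : Prop :=
  ∃ (m : ℕ) (H : Fin (m + 1) → G.Subgraph),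
    IsCycleSub (H 0) ∧ (∀ k : Fin m, EarStep (H k.castSucc) (H k.succ)) ∧
    H (Fin.last m) = K

namespace IsEarDecomposable

variable {K K' : G.Subgraph}

theorem of_isCycleSub (h : IsCycleSub K) : IsEarDecomposable K :=
  ⟨0, fun _ => K, h, Fin.elim0, rfl⟩

theorem earStep (h : IsEarDecomposable K) (hK : EarStep K K') : IsEarDecomposable K' := by
  obtain ⟨m, H, h0, hstep, rfl⟩ := h
  refine ⟨m + 1, Fin.snoc H K', by simpa using h0, fun k => ?_, by simp⟩
  induction k using Fin.lastCases with
  | last => simpa using hK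
  | cast k => rw [Fin.succ_castSucc, Fin.snoc_castSucc, Fin.snoc_castSucc]; exact hstep k

theorem induction_on {P : G.Subgraph → Prop} (h : IsEarDecomposable K)
    (cycle : ∀ K, IsCycleSub K → P K) (ear : ∀ K K', EarStep K K' → P K → P K') :
    P K := by
  obtain ⟨m, H, h0, hstep, rfl⟩ := h
  exact Fin.induction (motive := fun k => P (H k)) (cycle _ h0)
    (fun k hk => ear _ _ (hstep k) hk) (Fin.last m)

theorem connectedMinusVertex (h : IsEarDecomposable K) : ConnectedMinusVertex G K.verts :=
  h.induction_on (fun _ => IsCycleSub.connectedMinusVertex) fun _ _ => EarStep.connectedMinusVertex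

theorem top [Finite V] (hconn : G.Connected)
    (hdel : ∀ v : V, (G.induce {w : V | w ≠ v}).Connected) (h : IsEarDecomposable K) :
    IsEarDecomposable (⊤ : G.Subgraph) := by
  induction K using WellFoundedGT.induction with
  | _ K ih =>
    by_cases htop : K = ⊤
    · exact htop ▸ h
    have := hconn.nonempty
    obtain ⟨K', hK'⟩ := exists_earStep hconn hdel h.connectedMinusVertex.nontrivial htop
    exact ih K' hK'.lt (h.earStep hK')

end IsEarDecomposable

end EarDecomposition

theorem biconnected_iff_ear_decomposition_general {V : Type} [Fintype V]
    (G : SimpleGraph V) :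
    Biconnected G ↔
      ∃ (m : ℕ) (H : Fin (m + 1) → G.Subgraph),
        IsCycleSub (H 0) ∧ (∀ k : Fin m, EarStep (H k.castSucc) (H k.succ)) ∧
        H (Fin.last m) = ⊤ := by
  constructor
  · intro hG
    obtain ⟨u, c, hc⟩ := hG.exists_isCycle
    exact (IsEarDecomposable.of_isCycleSub ⟨u, c, hc, rfl⟩).top hG.2.1 hG.2.2
  · intro h
    obtain ⟨_, _, ⟨_, _, hc, -⟩, -⟩ := id h
    exact Biconnected.of_connectedMinusVertex_univ hc.three_le_card
      (by simpa using IsEarDecomposable.connectedMinusVertex h)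

/-- open ear decomposition: a graph is biconnected iff it can be obtained
from a cycle graph by successively adding ears. -/
theorem biconnected_iff_ear_decomposition {V : Type} [Fintype V] [DecidableEq V]
    (G : SimpleGraph V) :
    Biconnected G ↔
      ∃ (m : ℕ) (H : Fin (m + 1) → G.Subgraph),
        IsCycleSub (H 0) ∧ (∀ k : Fin m, EarStep (H k.castSucc) (H k.succ)) ∧
        H (Fin.last m) = ⊤ :=
  biconnected_iff_ear_decomposition_general G
end
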